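/- Let A and B be finite types, let k ≥ 2 be an integer, and let σ be a density matrix on A × B (positive semidefinite with tr σ = 1). Then σ ∈ PPT_k(A:B) if and only if σ^{T_B} is positive semidefinite. -/

import Mathlib

open Matrix
open scoped ComplexOrder

/-- Total positive semidefinite square root: the PSD square root of `M` if `M` is PSD,
and junk value `0` otherwise. -/
noncomputable def msqrt {n : Type*} [Fintype n] [DecidableEq n]
    (M : Matrix n n ℂ) : Matrix n n ℂ :=
  letI := Classical.dec M.PosSemidef
  if h : M.PosSemidef then
    (h.1.eigenvectorUnitary : Matrix n n ℂ) * diagonal ((↑) ∘ (√·) ∘ h.1.eigenvalues) *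
      (star h.1.eigenvectorUnitary : Matrix n n ℂ) else 0

/-- The trace norm `‖M‖₁ = tr √(Mᴴ M)` of a complex matrix, as a real number. -/
noncomputable def traceNorm {n : Type*} [Fintype n] [DecidableEq n]
    (M : Matrix n n ℂ) : ℝ :=
  (msqrt (Mᴴ * M)).trace.re

/-- The partial transpose over the second party `B`:
`M^{T_B}((a,b),(a',b')) = M((a,b'),(a',b))`. -/
def ptB {A B : Type*} (M : Matrix (A × B) (A × B) ℂ) : Matrix (A × B) (A × B) ℂ :=
  fun x y => M (x.1, y.2) (y.1, x.2)

/-- The set `PPT_k(A:B)`: positive semidefinite `ω₁` such that there exist `ω₂, …, ω_k` with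
`−ω_{i+1} ⪯ ω_i^{T_B} ⪯ ω_{i+1}` for all `1 ≤ i ≤ k−1` and `‖ω_k^{T_B}‖₁ ≤ 1`. -/
def PPTset {A B : Type*} [Fintype A] [Fintype B] [DecidableEq A] [DecidableEq B]
    (k : ℕ) : Set (Matrix (A × B) (A × B) ℂ) :=
  {σ | σ.PosSemidef ∧ ∃ ω : ℕ → Matrix (A × B) (A × B) ℂ, ω 1 = σ ∧
    (∀ i, 1 ≤ i → i ≤ k - 1 →
      (ω (i + 1) - ptB (ω i)).PosSemidef ∧ (ω (i + 1) + ptB (ω i)).PosSemidef) ∧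
    traceNorm (ptB (ω k)) ≤ 1}

/-!
For Hermitian `X`, `‖X‖₁ = ∑ |λᵢ| ≥ tr X` with equality iff `X ⪰ 0`, and `−Y ⪯ X ⪯ Y` forces
`‖X‖₁ ≤ tr Y`. Along a `PPT_k` chain the traces of `ω₂, …, ω_k` increase, so
`‖σ^{T_B}‖₁ ≤ tr ω₂ ≤ tr ω_k ≤ ‖ω_k^{T_B}‖₁ ≤ 1 = tr σ^{T_B}`, whence `σ^{T_B} ⪰ 0`.
Conversely, if `σ^{T_B} ⪰ 0` the alternating sequence `σ, σ^{T_B}, σ, …` meets every constraint.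
-/

namespace Matrix

variable {n : Type*}

lemma posSemidef_of_posSemidef_sub_of_posSemidef_add {X Y : Matrix n n ℂ}
    (h₁ : (Y - X).PosSemidef) (h₂ : (Y + X).PosSemidef) : Y.PosSemidef := by
  convert (h₁.add h₂).smul (show (0 : ℝ) ≤ 1 / 2 by norm_num) using 1
  ext i j
  simp only [smul_apply, add_apply, sub_apply, Complex.real_smul]
  push_cast
  ring

variable [Fintype n]

lemma re_trace_le_re_trace_of_posSemidef_sub {X Y : Matrix n n ℂ} (h : (Y - X).PosSemidef) :
    X.trace.re ≤ Y.trace.re := by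
  have := (Complex.le_def.mp h.trace_nonneg).1
  rw [trace_sub, Complex.sub_re, Complex.zero_re] at this
  linarith

lemma trace_eq_sum_star_dotProduct_mulVec {𝕜 : Type*} [RCLike 𝕜]
    (b : OrthonormalBasis n 𝕜 (EuclideanSpace 𝕜 n)) (Y : Matrix n n 𝕜) :
    Y.trace = ∑ i, star ⇑(b i) ⬝ᵥ (Y *ᵥ ⇑(b i)) := by
  classical
  have htrace : LinearMap.trace 𝕜 _ (toLpLin 2 2 Y) = Y.trace := by
    rw [LinearMap.trace_eq_matrix_trace 𝕜 (PiLp.basisFun 2 𝕜 n), toLpLin_eq_toLin,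
      LinearMap.toMatrix_toLin]
  rw [← htrace, LinearMap.trace_eq_sum_inner _ b]
  simp [EuclideanSpace.inner_eq_star_dotProduct, dotProduct_comm]

variable [DecidableEq n]

lemma IsHermitian.trace_cfc {𝕜 : Type*} [RCLike 𝕜] {A : Matrix n n 𝕜} (hA : A.IsHermitian)
    (f : ℝ → ℝ) : (cfc f A).trace = ∑ i, (f (hA.eigenvalues i) : 𝕜) := by
  rw [hA.cfc_eq, IsHermitian.cfc, Unitary.conjStarAlgAut_apply, trace_mul_cycle,
    Unitary.coe_star_mul_self, one_mul, trace_diagonal]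
  rfl

variable {X Y : Matrix n n ℂ}

section TraceNorm

open scoped MatrixOrder

lemma PosSemidef.msqrt_eq_sqrt (hX : X.PosSemidef) : msqrt X = CFC.sqrt X := by
  rw [msqrt, dif_pos hX, CFC.sqrt_eq_real_sqrt X hX.nonneg, cfcₙ_eq_cfc, hX.1.cfc_eq,
    IsHermitian.cfc, Unitary.conjStarAlgAut_apply]
  rfl

lemma traceNorm_eq_re_trace_abs (X : Matrix n n ℂ) : traceNorm X = (CFC.abs X).trace.re := by
  rw [traceNorm, (posSemidef_conjTranspose_mul_self X).msqrt_eq_sqrt]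
  rfl

lemma PosSemidef.traceNorm_eq_re_trace (hX : X.PosSemidef) : traceNorm X = X.trace.re := by
  rw [traceNorm_eq_re_trace_abs, CFC.abs_of_nonneg X hX.nonneg]

lemma IsHermitian.traceNorm_eq_sum_abs_eigenvalues (hX : X.IsHermitian) :
    traceNorm X = ∑ i, |hX.eigenvalues i| := by
  rw [traceNorm_eq_re_trace_abs, CFC.abs_eq_cfc_norm X hX.isSelfAdjoint, hX.trace_cfc]
  simp

end TraceNorm

lemma IsHermitian.re_trace_eq_sum_eigenvalues (hX : X.IsHermitian) :
    X.trace.re = ∑ i, hX.eigenvalues i := by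
  simp [hX.trace_eq_sum_eigenvalues]

lemma IsHermitian.re_trace_le_traceNorm (hX : X.IsHermitian) : X.trace.re ≤ traceNorm X := by
  rw [hX.traceNorm_eq_sum_abs_eigenvalues, hX.re_trace_eq_sum_eigenvalues]
  exact Finset.sum_le_sum fun i _ => le_abs_self _

lemma IsHermitian.posSemidef_of_traceNorm_le_re_trace (hX : X.IsHermitian)
    (h : traceNorm X ≤ X.trace.re) : X.PosSemidef := by
  rw [hX.traceNorm_eq_sum_abs_eigenvalues, hX.re_trace_eq_sum_eigenvalues] at h
  have hle : ∀ i ∈ Finset.univ, hX.eigenvalues i ≤ |hX.eigenvalues i| := fun i _ => le_abs_self _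
  have heq := (Finset.sum_eq_sum_iff_of_le hle).mp (le_antisymm (Finset.sum_le_sum hle) h)
  exact hX.posSemidef_iff_eigenvalues_nonneg.mpr fun i =>
    heq i (Finset.mem_univ i) ▸ abs_nonneg _

/-- Testing `Y ∓ X ⪰ 0` against the eigenvectors `v` of `X` gives `|⟨v, X v⟩| ≤ ⟨v, Y v⟩`. -/
lemma IsHermitian.traceNorm_le_re_trace_of_posSemidef_sub_of_posSemidef_add
    (hX : X.IsHermitian) (h₁ : (Y - X).PosSemidef) (h₂ : (Y + X).PosSemidef) :
    traceNorm X ≤ Y.trace.re := by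
  rw [hX.traceNorm_eq_sum_abs_eigenvalues,
    trace_eq_sum_star_dotProduct_mulVec hX.eigenvectorBasis, Complex.re_sum]
  refine Finset.sum_le_sum fun i _ => ?_
  set v := ⇑(hX.eigenvectorBasis i)
  have hsub := (Complex.le_def.mp (h₁.dotProduct_mulVec_nonneg v)).1
  have hadd := (Complex.le_def.mp (h₂.dotProduct_mulVec_nonneg v)).1
  rw [sub_mulVec, dotProduct_sub, Complex.sub_re] at hsub
  rw [add_mulVec, dotProduct_add, Complex.add_re] at hadd
  have hev : hX.eigenvalues i = (star v ⬝ᵥ X *ᵥ v).re := hX.eigenvalues_eq i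
  exact abs_le.mpr ⟨by simp only [Complex.zero_re] at hadd; linarith,
    by simp only [Complex.zero_re] at hsub; linarith⟩

end Matrix

section PartialTranspose

variable {A B : Type*}

lemma ptB_involutive : Function.Involutive (ptB : Matrix (A × B) (A × B) ℂ → _) :=
  fun _ => rfl

lemma trace_ptB [Fintype A] [Fintype B] (M : Matrix (A × B) (A × B) ℂ) :
    (ptB M).trace = M.trace :=
  rfl

lemma Matrix.IsHermitian.ptB {M : Matrix (A × B) (A × B) ℂ} (hM : M.IsHermitian) :
    (ptB M).IsHermitian := by
  ext x y
  simpa [_root_.ptB] using congr_fun₂ hM (x.1, y.2) (y.1, x.2)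

variable [Fintype A] [Fintype B] [DecidableEq A] [DecidableEq B]

lemma mem_PPTset_of_posSemidef_ptB (k : ℕ) {σ : Matrix (A × B) (A × B) ℂ}
    (hσ : σ.PosSemidef) (htr : σ.trace = 1) (hppt : (ptB σ).PosSemidef) :
    σ ∈ PPTset (A := A) (B := B) k := by
  have hiter : ∀ m, (ptB^[m] σ).PosSemidef ∧ (ptB^[m] σ).trace = 1 := fun m => by
    rcases m.even_or_odd with hm | hm
    · rw [ptB_involutive.iterate_even hm]; exact ⟨hσ, htr⟩
    · rw [ptB_involutive.iterate_odd hm]; exact ⟨hppt, htr⟩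
  refine ⟨hσ, fun i => ptB^[i + 1] σ, rfl, fun i _ _ => ?_, ?_⟩
  · rw [← Function.iterate_succ_apply' ptB, sub_self]
    exact ⟨.zero, (hiter _).1.add (hiter _).1⟩
  · rw [← Function.iterate_succ_apply' ptB, (hiter _).1.traceNorm_eq_re_trace, (hiter _).2,
      Complex.one_re]

lemma posSemidef_ptB_of_mem_PPTset {k : ℕ} (hk : 2 ≤ k) {σ : Matrix (A × B) (A × B) ℂ}
    (htr : σ.trace = 1) (hmem : σ ∈ PPTset (A := A) (B := B) k) : (ptB σ).PosSemidef := by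
  obtain ⟨hσ, ω, rfl, hω, hnorm⟩ := hmem
  have hmono : MonotoneOn (fun i => (ω i).trace.re) (Set.Icc 1 k) := by
    refine monotoneOn_of_le_succ Set.ordConnected_Icc fun i _ hi hi' => ?_
    rw [Order.succ_eq_add_one] at hi' ⊢
    rw [← trace_ptB (ω i)]
    exact Matrix.re_trace_le_re_trace_of_posSemidef_sub (hω i hi.1 (Nat.le_sub_one_of_lt hi'.2)).1
  have hωk : (ω k).PosSemidef := by
    obtain ⟨h₁, h₂⟩ := hω (k - 1) (by omega) le_rfl
    rw [Nat.sub_add_cancel (by omega)] at h₁ h₂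
    exact Matrix.posSemidef_of_posSemidef_sub_of_posSemidef_add h₁ h₂
  obtain ⟨h₁, h₂⟩ := hω 1 le_rfl (by omega)
  refine hσ.1.ptB.posSemidef_of_traceNorm_le_re_trace ?_
  calc traceNorm (ptB (ω 1))
      ≤ (ω 2).trace.re :=
        hσ.1.ptB.traceNorm_le_re_trace_of_posSemidef_sub_of_posSemidef_add h₁ h₂
    _ ≤ (ω k).trace.re := hmono ⟨by omega, hk⟩ ⟨by omega, le_rfl⟩ hk
    _ ≤ traceNorm (ptB (ω k)) := trace_ptB (ω k) ▸ hωk.1.ptB.re_trace_le_traceNorm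
    _ ≤ 1 := hnorm
    _ = (ptB (ω 1)).trace.re := by rw [trace_ptB, htr, Complex.one_re]

end PartialTranspose

theorem mem_PPTset_iff_ppt {A B : Type*}
    [Fintype A] [Fintype B] [DecidableEq A] [DecidableEq B]
    (k : ℕ) (hk : 2 ≤ k) (σ : Matrix (A × B) (A × B) ℂ)
    (hσ : σ.PosSemidef) (htr : σ.trace = 1) :
    σ ∈ PPTset (A := A) (B := B) k ↔ (ptB σ).PosSemidef :=
  ⟨posSemidef_ptB_of_mem_PPTset hk htr, mem_PPTset_of_posSemidef_ptB k hσ htr⟩
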